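/- arXiv:1511.08128 — 3 statements merged into one kernel-verified Lean document; each statement's English description precedes it below -/
import Mathlib

section
/- If G is a simple graph with girth at least 5 and U, W are disjoint vertex subsets with |E(U,W)| edges between them, then for any natural number r, the number p(U,W) of 3-vertex paths with middle vertex in U and both endpoints in W satisfies p(U,W) ≥ ((r+1)|U| - |E(U,W)|)·C(r,2) + (|E(U,W)| - r|U|)·C(r+1,2). -/
/-!
Ordered paths `a - u - c` with `u ∈ U` and `a, c ∈ W` correspond to ordered pairs of distinct
`W`-neighbours of `u`, so their number is `∑_{u ∈ U} 2 C(d_u, 2)` with `d_u = |N(u) ∩ W|` and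
`∑_{u ∈ U} d_u = |E(U, W)|`. As `C(·, 2)` is convex on the integers, each `C(d_u, 2)` is at least
the value at `d_u` of its chord through `r` and `r + 1`; summing over `U` gives the bound.
-/

open Finset

lemma two_mul_cast_choose_two (n : ℕ) : 2 * (n.choose 2 : ℤ) = n * (n - 1) := by
  rw [← Nat.cast_descFactorial_two, Nat.descFactorial_eq_factorial_mul_choose]
  push_cast
  rfl

lemma Finset.card_offDiag_eq_two_mul_choose_two {α : Type*} [DecidableEq α] (s : Finset α) :
    #s.offDiag = 2 * (#s).choose 2 := by
  rw [← Sym2.two_mul_card_image_offDiag, Sym2.card_image_offDiag]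

/-- The chord of `n ↦ C(n, 2)` through `r` and `r + 1` lies below it at every integer `d`:
twice the gap is `(d - r) (d - r - 1) ≥ 0`. -/
lemma chord_choose_two_le (r d : ℕ) :
    ((r : ℤ) + 1 - d) * r.choose 2 + ((d : ℤ) - r) * (r + 1).choose 2 ≤ d.choose 2 := by
  have hr := two_mul_cast_choose_two r
  have hr' := two_mul_cast_choose_two (r + 1)
  have hd := two_mul_cast_choose_two d
  push_cast at hr'
  have gap : 0 ≤ ((d : ℤ) - r) * ((d : ℤ) - r - 1) := by
    rcases le_or_gt (d : ℤ) r with h | h <;> nlinarith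
  nlinarith

lemma le_sum_choose_two {ι : Type*} (s : Finset ι) (d : ι → ℕ) (r : ℕ) :
    (((r : ℤ) + 1) * #s - ∑ i ∈ s, (d i : ℤ)) * r.choose 2
        + (∑ i ∈ s, (d i : ℤ) - r * #s) * (r + 1).choose 2
      ≤ ∑ i ∈ s, ((d i).choose 2 : ℤ) := by
  calc _ = ∑ i ∈ s, (((r : ℤ) + 1 - d i) * r.choose 2 + ((d i : ℤ) - r) * (r + 1).choose 2) := by
        simp only [sum_add_distrib, ← sum_mul, sum_sub_distrib, sum_const, nsmul_eq_mul]
        ring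
    _ ≤ _ := sum_le_sum fun i _ => chord_choose_two_le r (d i)

section

variable {V : Type*} (G : SimpleGraph V) [DecidableRel G.Adj] (U W : Finset V)

lemma ncard_edges_between_eq_sum :
    {p : V × V | p.1 ∈ U ∧ p.2 ∈ W ∧ G.Adj p.1 p.2}.ncard = ∑ u ∈ U, #{w ∈ W | G.Adj u w} := by
  have : {p : V × V | p.1 ∈ U ∧ p.2 ∈ W ∧ G.Adj p.1 p.2} = ↑{p ∈ U ×ˢ W | G.Adj p.1 p.2} := by
    ext; simp [and_assoc]
  rw [this, Set.ncard_coe_finset, card_filter, sum_product]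
  simp only [card_filter]

lemma ncard_cherries_eq_sum_card_offDiag [DecidableEq V] :
    {t : V × V × V | t.2.1 ∈ U ∧ t.1 ∈ W ∧ t.2.2 ∈ W ∧
        G.Adj t.1 t.2.1 ∧ G.Adj t.2.1 t.2.2 ∧ t.1 ≠ t.2.2}.ncard
      = ∑ u ∈ U, #{w ∈ W | G.Adj u w}.offDiag := by
  have : {t : V × V × V | t.2.1 ∈ U ∧ t.1 ∈ W ∧ t.2.2 ∈ W ∧
        G.Adj t.1 t.2.1 ∧ G.Adj t.2.1 t.2.2 ∧ t.1 ≠ t.2.2}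
      = (fun x : (_ : V) × V × V => (x.2.1, x.1, x.2.2)) ''
          ↑(U.sigma fun u => {w ∈ W | G.Adj u w}.offDiag) := by
    ext ⟨a, b, c⟩
    simp only [Set.mem_ofPred_eq, Set.mem_image, coe_sigma, Set.mem_sigma_iff, mem_coe, mem_offDiag,
      mem_filter, Sigma.exists, Prod.mk.injEq]
    constructor
    · rintro ⟨hb, ha, hc, hab, hbc, hac⟩
      exact ⟨b, (a, c), ⟨hb, ⟨ha, hab.symm⟩, ⟨hc, hbc⟩, hac⟩, rfl, rfl, rfl⟩
    · rintro ⟨u, ⟨a, c⟩, ⟨hu, ⟨ha, hua⟩, ⟨hc, huc⟩, hac⟩, rfl, rfl, rfl⟩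
      exact ⟨hu, ha, hc, hua.symm, huc, hac⟩
  rw [this, Set.ncard_image_of_injective, Set.ncard_coe_finset, card_sigma]
  rintro ⟨u, a, c⟩ ⟨u', a', c'⟩ h
  simp_all

end

theorem stmt5_general {V : Type*} (G : SimpleGraph V)
    (U W : Finset V) (r : ℕ)
    (z : ℕ)
    (hz : z = {p : V × V | p.1 ∈ U ∧ p.2 ∈ W ∧ G.Adj p.1 p.2}.ncard) :
    2 * ((((r : ℤ) + 1) * U.card - z) * Nat.choose r 2
          + ((z : ℤ) - r * U.card) * Nat.choose (r + 1) 2)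
      ≤ ({t : V × V × V | t.2.1 ∈ U ∧ t.1 ∈ W ∧ t.2.2 ∈ W ∧
          G.Adj t.1 t.2.1 ∧ G.Adj t.2.1 t.2.2 ∧ t.1 ≠ t.2.2}.ncard : ℤ) := by
  classical
  have hz' : (z : ℤ) = ∑ u ∈ U, (#{w ∈ W | G.Adj u w} : ℤ) := by
    rw [hz, ncard_edges_between_eq_sum]
    push_cast
    rfl
  rw [ncard_cherries_eq_sum_card_offDiag, hz']
  simp only [card_offDiag_eq_two_mul_choose_two]
  push_cast
  rw [← mul_sum]
  exact mul_le_mul_of_nonneg_left (le_sum_choose_two U _ r) zero_le_two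

/-- Lemma 2.8 (lower bound): if `U` and `W` are disjoint vertex sets of a
graph of girth ≥ 5, `z = |E(U,W)|`, then for every natural number `r`,
`p(U,W) ≥ ((r+1)|U| - z)·C(r,2) + (z - r|U|)·C(r+1,2)` (over ℤ, since the
right-hand side terms may be negative).  `p(U,W)` counts unordered 3-vertex
paths with middle vertex in `U` and endpoints in `W`; here each such path is
counted twice, as two ordered paths, so both sides are doubled. -/
theorem stmt5 {V : Type*} [Fintype V] (G : SimpleGraph V) [DecidableRel G.Adj]
    (hg : 5 ≤ G.girth) (U W : Finset V) (hUW : Disjoint U W) (r : ℕ)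
    (z : ℕ)
    (hz : z = {p : V × V | p.1 ∈ U ∧ p.2 ∈ W ∧ G.Adj p.1 p.2}.ncard) :
    2 * ((((r : ℤ) + 1) * U.card - z) * Nat.choose r 2
          + ((z : ℤ) - r * U.card) * Nat.choose (r + 1) 2)
      ≤ ({t : V × V × V | t.2.1 ∈ U ∧ t.1 ∈ W ∧ t.2.2 ∈ W ∧
          G.Adj t.1 t.2.1 ∧ G.Adj t.2.1 t.2.2 ∧ t.1 ≠ t.2.2}.ncard : ℤ) :=
  stmt5_general G U W r z hz
end

section
/- Every simple graph on n vertices with girth at least 5 has at most (1/2)·n·√(n-1) edges. -/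
open SimpleGraph Finset

lemma girth_le_of_cycle {α : Type*} {G : SimpleGraph α} {a : α} (w : G.Walk a a)
    (hw : w.IsCycle) : G.girth ≤ w.length := by
  have h1 : G.egirth ≤ w.length := iInf_le_of_le a (iInf_le_of_le w (iInf_le _ hw))
  calc G.girth = G.egirth.toNat := rfl
    _ ≤ _ := ENat.toNat_le_toNat h1 (by simp)

lemma no_tri {α : Type*} {G : SimpleGraph α} (hg : 5 ≤ G.girth)
    {a b c : α} (hab : G.Adj a b) (hbc : G.Adj b c) (hca : G.Adj c a) : False := by
  have w : G.Walk a a := .cons hab (.cons hbc (.cons hca .nil))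
  have hc : (SimpleGraph.Walk.cons hab (.cons hbc (.cons hca .nil)) : G.Walk a a).IsCycle := by
    simp [Walk.isCycle_def, Walk.isTrail_def, hab.ne, hbc.ne, hca.ne, hab.ne', hbc.ne', hca.ne',
      Sym2.eq_iff]
  have := girth_le_of_cycle _ hc
  simp [Walk.length_cons] at this
  omega

lemma no_sq {α : Type*} {G : SimpleGraph α} (hg : 5 ≤ G.girth)
    {a b u v : α} (hab : a ≠ b) (huv : u ≠ v) (h1 : G.Adj a u) (h2 : G.Adj u b) (h3 : G.Adj b v)
    (h4 : G.Adj v a) : False := by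
  have hc : (SimpleGraph.Walk.cons h1 (.cons h2 (.cons h3 (.cons h4 .nil))) : G.Walk a a).IsCycle := by
    simp [Walk.isCycle_def, Walk.isTrail_def, Sym2.eq_iff]
    aesop
  have := girth_le_of_cycle _ hc
  simp [Walk.length_cons] at this
  omega

open SimpleGraph Finset

section counting
variable {V : Type*} [Fintype V] [DecidableEq V] (G : SimpleGraph V) [DecidableRel G.Adj]

lemma local_bound
    (htri : ∀ {a b c : V}, G.Adj a b → G.Adj b c → G.Adj c a → False)
    (hsq : ∀ {a b u v : V}, a ≠ b → u ≠ v → G.Adj a u → G.Adj u b → G.Adj b v → G.Adj v a → False)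
    (v : V) : ∑ u ∈ G.neighborFinset v, G.degree u ≤ Fintype.card V - 1 := by
  have hvd : 1 + G.degree v ≤ Fintype.card V := by
    have : (insert v (G.neighborFinset v)).card ≤ Fintype.card V :=
      (Finset.card_le_card (Finset.subset_univ _)).trans_eq (by simp)
    rwa [Finset.card_insert_of_notMem (by simp), add_comm] at this
  have hdeg : ∀ u ∈ G.neighborFinset v, G.degree u = ((G.neighborFinset u).erase v).card + 1 := by
    intro u hu
    rw [Finset.card_erase_of_mem (by simp [mem_neighborFinset] at hu ⊢; exact hu.symm)]
    have : 1 ≤ G.degree u := by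
      rw [← card_neighborFinset_eq_degree]
      exact Finset.card_pos.2 ⟨v, by simp [mem_neighborFinset] at hu ⊢; exact hu.symm⟩
    rw [card_neighborFinset_eq_degree]; omega
  rw [Finset.sum_congr rfl hdeg, Finset.sum_add_distrib, Finset.sum_const, smul_eq_mul, mul_one,
    card_neighborFinset_eq_degree]
  have hdisj : (G.neighborFinset v : Set V).Pairwise
      (Function.onFun Disjoint fun u => (G.neighborFinset u).erase v) := by
    intro u1 h1 u2 h2 hne
    simp only [Finset.coe_mem, Finset.mem_coe, mem_neighborFinset] at h1 h2
    refine Finset.disjoint_left.2 fun w hw1 hw2 => ?_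
    simp only [Finset.mem_erase, mem_neighborFinset] at hw1 hw2
    exact hsq (a := v) (b := w) hw1.1.symm hne h1 hw1.2 hw2.2.symm h2.symm
  have hcard : ∑ u ∈ G.neighborFinset v, ((G.neighborFinset u).erase v).card
      = ((G.neighborFinset v).biUnion fun u => (G.neighborFinset u).erase v).card :=
    (Finset.card_biUnion (fun u h1 w h2 hne => hdisj h1 h2 hne)).symm
  have hsub : ((G.neighborFinset v).biUnion fun u => (G.neighborFinset u).erase v)
      ⊆ Finset.univ \ insert v (G.neighborFinset v) := by
    intro w hw
    simp only [Finset.mem_biUnion, Finset.mem_erase, mem_neighborFinset] at hw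
    obtain ⟨u, hu, hwv, huw⟩ := hw
    simp only [Finset.mem_sdiff, Finset.mem_univ, Finset.mem_insert, mem_neighborFinset, true_and]
    push_neg
    exact ⟨hwv, fun hvw => htri hvw huw.symm hu.symm⟩
  have hle := (Finset.card_le_card hsub).trans_eq (by
    rw [Finset.card_sdiff_of_subset (Finset.subset_univ _), Finset.card_insert_of_notMem (by simp),
      Finset.card_univ, card_neighborFinset_eq_degree])
  omega
  
omit [DecidableEq V] in
lemma sum_sq_eq : ∑ u : V, G.degree u ^ 2 = ∑ v : V, ∑ u ∈ G.neighborFinset v, G.degree u := by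
  simp only [neighborFinset_eq_filter, Finset.sum_filter]
  rw [Finset.sum_comm]
  refine Finset.sum_congr rfl fun u _ => ?_
  rw [← Finset.sum_filter]
  have : Finset.filter (fun v => G.Adj v u) Finset.univ = G.neighborFinset u := by
    ext v; simp [mem_neighborFinset, adj_comm]
  rw [this, Finset.sum_const, card_neighborFinset_eq_degree, smul_eq_mul, sq]
end counting

/-- The Dutton–Brigham / Garnick–Kwong–Lazebnik bound: every simple graph on
`n` vertices with girth at least 5 has at most `(1/2)·n·√(n-1)` edges. -/
theorem stmt7 {V : Type*} [Fintype V] (G : SimpleGraph V)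
    (hg : 5 ≤ G.girth) :
    (G.edgeSet.ncard : ℝ)
      ≤ (1 / 2) * (Fintype.card V : ℝ)
          * Real.sqrt ((Fintype.card V : ℝ) - 1) := by
  classical
  set n := Fintype.card V with hn
  have hncard : G.edgeSet.ncard = G.edgeFinset.card := by
    rw [← SimpleGraph.coe_edgeFinset, Set.ncard_coe_finset]
  rcases Nat.eq_zero_or_pos n with h0 | hn1
  · have : IsEmpty V := Fintype.card_eq_zero_iff.mp h0
    have he : G.edgeSet = ∅ := Set.eq_empty_of_isEmpty _
    rw [he]
    simp [h0]
  have htri : ∀ {a b c : V}, G.Adj a b → G.Adj b c → G.Adj c a → False :=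
    fun h1 h2 h3 => no_tri hg h1 h2 h3
  have hsq' : ∀ {a b u v : V}, a ≠ b → u ≠ v → G.Adj a u → G.Adj u b → G.Adj b v →
      G.Adj v a → False := fun hab huv h1 h2 h3 h4 => no_sq hg hab huv h1 h2 h3 h4
  have hsum2 : ∑ u : V, G.degree u ^ 2 ≤ n * (n - 1) := by
    rw [sum_sq_eq]
    calc ∑ v : V, ∑ u ∈ G.neighborFinset v, G.degree u
        ≤ ∑ _v : V, (n - 1) := Finset.sum_le_sum fun v _ => local_bound G htri hsq' v
      _ = n * (n - 1) := by simp [hn, mul_comm]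
  have he : ∑ v : V, G.degree v = 2 * G.edgeFinset.card :=
    G.sum_degrees_eq_twice_card_edges
  set e : ℝ := (G.edgeFinset.card : ℝ) with hedef
  set N : ℝ := (n : ℝ) with hNdef
  have hN1 : (1 : ℝ) ≤ N := by rw [hNdef]; exact_mod_cast Nat.one_le_iff_ne_zero.mpr hn1.ne'
  have hCS : (∑ v : V, (G.degree v : ℝ)) ^ 2 ≤ N * ∑ v : V, (G.degree v : ℝ) ^ 2 := by
    have := sq_sum_le_card_mul_sum_sq (s := (Finset.univ : Finset V))
      (f := fun v => (G.degree v : ℝ))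
    simpa [hn] using this
  have h2e : (2 * e) = ∑ v : V, (G.degree v : ℝ) := by
    rw [hedef]; exact_mod_cast he.symm
  have hS : ∑ v : V, (G.degree v : ℝ) ^ 2 ≤ N * (N - 1) := by
    have h1 : ((∑ u : V, G.degree u ^ 2 : ℕ) : ℝ) ≤ ((n * (n - 1) : ℕ) : ℝ) := by
      exact_mod_cast hsum2
    have h2 : ((n * (n - 1) : ℕ) : ℝ) = N * (N - 1) := by
      rw [Nat.cast_mul, Nat.cast_sub hn1]; push_cast; ring
    rw [h2] at h1
    refine le_trans (le_of_eq ?_) h1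
    push_cast
    rfl
  have hkey : 2 * e ≤ N * Real.sqrt (N - 1) := by
    have hsq2 : (2 * e) ^ 2 ≤ N ^ 2 * (N - 1) := by
      rw [h2e]
      calc (∑ v : V, (G.degree v : ℝ)) ^ 2 ≤ N * ∑ v : V, (G.degree v : ℝ) ^ 2 := hCS
        _ ≤ N * (N * (N - 1)) := by
            refine mul_le_mul_of_nonneg_left hS (by linarith)
        _ = N ^ 2 * (N - 1) := by ring
    have hepos : (0 : ℝ) ≤ 2 * e := by positivity
    calc 2 * e = Real.sqrt ((2 * e) ^ 2) := (Real.sqrt_sq hepos).symm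
      _ ≤ Real.sqrt (N ^ 2 * (N - 1)) := Real.sqrt_le_sqrt hsq2
      _ = N * Real.sqrt (N - 1) := by
          rw [Real.sqrt_mul (by positivity), Real.sqrt_sq (by linarith)]
  rw [hncard]
  linarith
end

section
/- If G is a simple graph with girth at least 5 on 40 vertices with 120 edges, then the maximum degree of G is at most 7. -/
/-!
Suppose some vertex `v` has degree `d ≥ 8`. Let `A` be its neighbourhood, `B` the `39 - d`
vertices neither equal nor adjacent to `v`, and `c x = |N(x) ∩ B|`. Since the graph has no
triangles and no 4-cycles, `c w = deg w - 1` for `w ∈ A`, the sets `N(w) ∩ B` with `w ∈ A` are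
pairwise disjoint (so `s = ∑_{w ∈ A} deg w ≤ 39`), and an ordered pair of distinct vertices of
`B` is either an edge or has at most one common neighbour, never both. Counting such pairs gives
`∑_x c x (c x - 1) + ∑_{u ∈ B} c u ≤ |B| (|B| - 1)`. Combined with the degree sum `240` and with
Cauchy–Schwarz applied on `A` and on `B` separately, this yields a cubic inequality in `d` and
`s` that fails whenever `8 ≤ d ≤ s ≤ 39`.
-/

open Finset

namespace SimpleGraph

variable {V : Type*} {G : SimpleGraph V}

theorem not_adj_of_five_le_girth (hg : 5 ≤ G.girth) {a b c : V} (hab : G.Adj a b)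
    (hbc : G.Adj b c) : ¬G.Adj c a := fun hca => by
  have hcyc : (Walk.cons hab (.cons hbc (.cons hca .nil))).IsCycle := by
    simp [Walk.cons_isCycle_iff, hab.ne, hbc.ne, hca.ne, hab.ne', hca.ne']
  simpa using hg.trans (G.girth_le_length hcyc)

theorem eq_of_adj_of_adj_of_five_le_girth (hg : 5 ≤ G.girth) {a b c d : V} (hac : a ≠ c)
    (hab : G.Adj a b) (hbc : G.Adj b c) (had : G.Adj a d) (hdc : G.Adj d c) : b = d := by
  by_contra hbd
  have hcyc : (Walk.cons hab (.cons hbc (.cons hdc.symm (.cons had.symm .nil)))).IsCycle := by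
    simp [Walk.cons_isCycle_iff, hab.ne, hbc.ne, had.ne, hab.ne', hdc.ne', had.ne', hac, hbd,
      Ne.symm hac]
  simpa using hg.trans (G.girth_le_length hcyc)

variable [Fintype V] [DecidableEq V]

section

variable (G) [DecidableRel G.Adj]

theorem sum_card_neighborFinset_inter (B : Finset V) :
    ∑ x, #(G.neighborFinset x ∩ B) = ∑ u ∈ B, G.degree u := by
  convert sum_card_bipartiteAbove_eq_sum_card_bipartiteBelow (s := univ) (t := B) G.Adj using 2
  · congr 1; ext; simp [bipartiteAbove, and_comm]
  · rw [← card_neighborFinset_eq_degree]; congr 1; ext; simp [bipartiteBelow, adj_comm]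

theorem card_filter_adj_product (B : Finset V) :
    #{p ∈ B ×ˢ B | G.Adj p.1 p.2} = ∑ u ∈ B, #(G.neighborFinset u ∩ B) := by
  rw [card_filter, sum_product]
  refine sum_congr rfl fun u _ => ?_
  rw [← card_filter]
  congr 1; ext; simp [and_comm]

theorem neighborFinset_compl_eq_compl_insert (v : V) :
    Gᶜ.neighborFinset v = (insert v (G.neighborFinset v))ᶜ := by
  rw [neighborFinset_compl, compl_insert, sdiff_singleton_eq_erase]

theorem neighborFinset_inter_neighborFinset_compl (v : V) :
    G.neighborFinset v ∩ Gᶜ.neighborFinset v = ∅ := by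
  rw [neighborFinset_compl_eq_compl_insert, ← disjoint_iff_inter_eq_empty,
    disjoint_compl_right_iff]
  exact subset_insert _ _

theorem sum_eq_add_sum_neighborFinset_add_sum_compl {M : Type*} [AddCommMonoid M]
    (f : V → M) (v : V) :
    ∑ x, f x = f v + ∑ w ∈ G.neighborFinset v, f w + ∑ u ∈ Gᶜ.neighborFinset v, f u := by
  rw [← sum_add_sum_compl (insert v (G.neighborFinset v)),
    sum_insert (G.notMem_neighborFinset_self v), neighborFinset_compl_eq_compl_insert]

end

variable [DecidableRel G.Adj]

theorem sum_card_neighborFinset_inter_le (hg : 5 ≤ G.girth) {v : V} {B : Finset V}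
    (hvB : v ∉ B) : ∑ w ∈ G.neighborFinset v, #(G.neighborFinset w ∩ B) ≤ #B := by
  rw [← card_biUnion]
  · exact card_le_card (biUnion_subset.2 fun _ _ => inter_subset_right)
  intro w hw w' hw' hww'
  rw [Function.onFun, Finset.disjoint_left]
  intro x hx hx'
  rw [mem_coe] at hw hw'
  simp only [mem_neighborFinset, mem_inter] at hw hw' hx hx'
  exact hww' <| eq_of_adj_of_adj_of_five_le_girth hg (ne_of_mem_of_not_mem hx.2 hvB).symm hw
    hx.1 hw' hx'.1

theorem sum_card_offDiag_add_sum_card_inter_le (hg : 5 ≤ G.girth) (B : Finset V) :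
    ∑ x, #(G.neighborFinset x ∩ B).offDiag + ∑ u ∈ B, #(G.neighborFinset u ∩ B)
      ≤ #B.offDiag := by
  have hdisj : (↑(univ : Finset V) : Set V).PairwiseDisjoint
      fun x => (G.neighborFinset x ∩ B).offDiag := by
    intro x _ x' _ hxx'
    rw [Function.onFun, Finset.disjoint_left]
    rintro ⟨p, q⟩ hpq hpq'
    simp only [mem_offDiag, mem_inter, mem_neighborFinset] at hpq hpq'
    exact hxx' <| eq_of_adj_of_adj_of_five_le_girth hg hpq.2.2 hpq.1.1.symm hpq.2.1.1
      hpq'.1.1.symm hpq'.2.1.1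
  rw [← card_biUnion hdisj, ← card_filter_adj_product, ← card_union_of_disjoint]
  · refine card_le_card (union_subset ?_ fun p hp => ?_)
    · exact biUnion_subset.2 fun x _ => offDiag_mono inter_subset_right
    · simp only [mem_filter, mem_product] at hp
      exact mem_offDiag.2 ⟨hp.1.1, hp.1.2, hp.2.ne⟩
  · rw [Finset.disjoint_left]
    rintro ⟨p, q⟩ hpq hadj
    simp only [mem_biUnion, mem_offDiag, mem_inter, mem_neighborFinset, mem_filter] at hpq hadj
    obtain ⟨x, -, ⟨hxp, -⟩, ⟨hxq, -⟩, -⟩ := hpq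
    exact not_adj_of_five_le_girth hg hxp hadj.2 hxq.symm

theorem card_neighborFinset_inter_compl_add_one (hg : 5 ≤ G.girth) {v w : V}
    (hvw : G.Adj v w) : #(G.neighborFinset w ∩ Gᶜ.neighborFinset v) + 1 = G.degree w := by
  have hclosed : G.neighborFinset w ∩ insert v (G.neighborFinset v) = {v} := by
    ext x
    simp only [mem_inter, mem_neighborFinset, mem_insert, mem_singleton]
    refine ⟨fun ⟨hwx, hx⟩ => hx.resolve_right fun hvx => ?_, fun hx => ⟨hx ▸ hvw.symm, .inl hx⟩⟩
    exact not_adj_of_five_le_girth hg hvw hwx hvx.symm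
  rw [← card_neighborFinset_eq_degree, ← card_inter_add_card_sdiff (G.neighborFinset w)
    (insert v (G.neighborFinset v)), hclosed, card_singleton, add_comm,
    neighborFinset_compl_eq_compl_insert, sdiff_eq_inter_compl]

theorem sum_card_neighborFinset_inter_add_degree (hg : 5 ≤ G.girth) (v : V) :
    ∑ w ∈ G.neighborFinset v, #(G.neighborFinset w ∩ Gᶜ.neighborFinset v) + G.degree v
      = ∑ w ∈ G.neighborFinset v, G.degree w := by
  rw [← card_neighborFinset_eq_degree, card_eq_sum_ones, ← sum_add_distrib]
  exact sum_congr rfl fun w hw =>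
    card_neighborFinset_inter_compl_add_one hg ((mem_neighborFinset _ _ _).1 hw)

theorem sum_degree_neighborFinset_le (hg : 5 ≤ G.girth) (v : V) :
    ∑ w ∈ G.neighborFinset v, G.degree w ≤ Fintype.card V - 1 := by
  have hdisj := sum_card_neighborFinset_inter_le hg (v := v) (B := Gᶜ.neighborFinset v) (by simp)
  rw [card_neighborFinset_eq_degree, degree_compl] at hdisj
  have := G.degree_lt_card_verts v
  rw [← sum_card_neighborFinset_inter_add_degree hg v]
  omega

theorem sum_card_inter_compl_add_two_mul_sum_degree (hg : 5 ≤ G.girth) (v : V) :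
    ∑ u ∈ Gᶜ.neighborFinset v, #(G.neighborFinset u ∩ Gᶜ.neighborFinset v)
      + 2 * ∑ w ∈ G.neighborFinset v, G.degree w = 2 * #G.edgeFinset := by
  have hc := G.sum_card_neighborFinset_inter (Gᶜ.neighborFinset v)
  have hA := sum_card_neighborFinset_inter_add_degree hg v
  rw [G.sum_eq_add_sum_neighborFinset_add_sum_compl _ v,
    neighborFinset_inter_neighborFinset_compl, card_empty] at hc
  rw [← sum_degrees_eq_twice_card_edges, G.sum_eq_add_sum_neighborFinset_add_sum_compl _ v, ← hc]
  omega

theorem sum_sq_card_inter_compl_le (hg : 5 ≤ G.girth) (v : V) :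
    ∑ w ∈ G.neighborFinset v, #(G.neighborFinset w ∩ Gᶜ.neighborFinset v) ^ 2
      + ∑ u ∈ Gᶜ.neighborFinset v, #(G.neighborFinset u ∩ Gᶜ.neighborFinset v) ^ 2 + Gᶜ.degree v
      ≤ Gᶜ.degree v ^ 2
        + ∑ w ∈ G.neighborFinset v, #(G.neighborFinset w ∩ Gᶜ.neighborFinset v) := by
  have hsq (s : Finset V) : #s.offDiag + #s = #s ^ 2 := by
    rw [offDiag_card, sq, Nat.sub_add_cancel (Nat.le_mul_self _)]
  have key := sum_card_offDiag_add_sum_card_inter_le hg (Gᶜ.neighborFinset v)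
  have hc2 : ∑ x, #(G.neighborFinset x ∩ Gᶜ.neighborFinset v) ^ 2
      = ∑ x, #(G.neighborFinset x ∩ Gᶜ.neighborFinset v).offDiag
        + ∑ x, #(G.neighborFinset x ∩ Gᶜ.neighborFinset v) := by
    rw [← sum_add_distrib]
    exact sum_congr rfl fun x _ => (hsq _).symm
  simp only [G.sum_eq_add_sum_neighborFinset_add_sum_compl _ v,
    neighborFinset_inter_neighborFinset_compl, offDiag_empty, card_empty] at hc2 key
  have hB := hsq (Gᶜ.neighborFinset v)
  rw [card_neighborFinset_eq_degree] at hB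
  omega

theorem neighborhood_inequality (hg : 5 ≤ G.girth) (v : V) :
    (G.degree v : ℤ) * (2 * #G.edgeFinset - 2 * ∑ w ∈ G.neighborFinset v, G.degree w) ^ 2
      + Gᶜ.degree v * (∑ w ∈ G.neighborFinset v, G.degree w - G.degree v) ^ 2
      ≤ Gᶜ.degree v * G.degree v * (Gᶜ.degree v * (Gᶜ.degree v - 1)
        + (∑ w ∈ G.neighborFinset v, G.degree w - G.degree v)) := by
  have hA := sum_card_neighborFinset_inter_add_degree hg v
  have hY := sum_card_inter_compl_add_two_mul_sum_degree hg v
  have hQ := sum_sq_card_inter_compl_le hg v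
  have csA := sq_sum_le_card_mul_sum_sq (s := G.neighborFinset v)
    (f := fun w => #(G.neighborFinset w ∩ Gᶜ.neighborFinset v))
  have csB := sq_sum_le_card_mul_sum_sq (s := Gᶜ.neighborFinset v)
    (f := fun w => #(G.neighborFinset w ∩ Gᶜ.neighborFinset v))
  rw [card_neighborFinset_eq_degree, Nat.cast_id] at csA csB
  generalize ∑ w ∈ G.neighborFinset v, #(G.neighborFinset w ∩ Gᶜ.neighborFinset v) = Z at *
  generalize ∑ u ∈ Gᶜ.neighborFinset v, #(G.neighborFinset u ∩ Gᶜ.neighborFinset v) = Y at *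
  generalize ∑ w ∈ G.neighborFinset v, #(G.neighborFinset w ∩ Gᶜ.neighborFinset v) ^ 2 = QA at *
  generalize ∑ u ∈ Gᶜ.neighborFinset v, #(G.neighborFinset u ∩ Gᶜ.neighborFinset v) ^ 2 = QB at *
  generalize G.degree v = d at *
  generalize Gᶜ.degree v = b at *
  obtain ⟨hY', hZ'⟩ : (2 * #G.edgeFinset - 2 * ∑ w ∈ G.neighborFinset v, G.degree w : ℤ) = Y ∧
      (∑ w ∈ G.neighborFinset v, G.degree w - d : ℤ) = Z := by omega
  rw [hY', hZ']
  zify at csA csB hQ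
  calc (d : ℤ) * Y ^ 2 + b * Z ^ 2 ≤ d * (b * QB) + b * (d * QA) := by gcongr
    _ = b * d * (QA + QB) := by ring
    _ ≤ b * d * (b * (b - 1) + Z) := mul_le_mul_of_nonneg_left (by linarith) (by positivity)

end SimpleGraph

theorem not_neighborhood_inequality_forty {d s : ℤ} (hd : 8 ≤ d) (hds : d ≤ s) (hs : s ≤ 39) :
    ¬d * (2 * 120 - 2 * s) ^ 2 + (39 - d) * (s - d) ^ 2
      ≤ (39 - d) * d * ((39 - d) * (39 - d - 1) + (s - d)) := by
  have h1 : 0 ≤ 39 - s := by linarith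
  have h2 : 0 ≤ d - 8 := by linarith
  have h3 : 0 ≤ s - d := by linarith
  nlinarith [mul_nonneg (mul_nonneg h3 h1) h2, mul_nonneg h3 h1, mul_nonneg h1 h2,
    sq_nonneg (s + d - 47), sq_nonneg (d - 8), sq_nonneg (39 - s)]

/-- In any girth ≥ 5 graph with 40 vertices and 120 edges, the maximum degree
is at most 7. -/
theorem stmt19 {V : Type*} [Fintype V] (G : SimpleGraph V) [DecidableRel G.Adj]
    (hn : Fintype.card V = 40) (he : G.edgeFinset.card = 120)
    (hg : 5 ≤ G.girth) :
    G.maxDegree ≤ 7 := by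
  classical
  refine G.maxDegree_le_of_forall_degree_le 7 fun v => ?_
  by_contra! hv
  have hd := G.degree_lt_card_verts v
  have hs := G.sum_degree_neighborFinset_le hg v
  have hds : G.degree v ≤ ∑ w ∈ G.neighborFinset v, G.degree w :=
    G.sum_card_neighborFinset_inter_add_degree hg v ▸ Nat.le_add_left _ _
  have key := G.neighborhood_inequality hg v
  rw [G.degree_compl, hn, he] at key
  rw [hn] at hd hs
  rw [show ((40 - 1 - G.degree v : ℕ) : ℤ) = 39 - G.degree v by omega] at key
  refine not_neighborhood_inequality_forty (d := G.degree v)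
    (s := (∑ w ∈ G.neighborFinset v, G.degree w : ℕ)) (by omega) (by omega) (by omega) ?_
  push_cast at key ⊢
  linarith
end
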